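/- Consider unlabeled self-loop chip-firing on ℤ, starting from 4m−1 chips at site 0 (m ≥ 1). In every complete firing sequence, the number of firings at site k equals (m−|k|)^2 for every k with |k| ≤ m, and equals 0 for every k with |k| > m. -/
import Mathlib


/-- An unlabeled self-loop firing of site `i`: legal when `i` holds at least 3
chips; `i` loses 2 chips and each neighbor gains 1 (one chip returns to `i`
via the self-loop). -/
def SLoopFire (c c' : ℤ → ℕ) (i : ℤ) : Prop :=
  3 ≤ c i ∧
  c' = fun j => if j = i - 1 then c j + 1
    else if j = i + 1 then c j + 1
    else if j = i then c j - 2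
    else c j

/-- The number of firings at site `k` during the firing sequence. -/
def firings (site : ℕ → ℤ) (T : ℕ) (k : ℤ) : ℕ :=
  ((Finset.range T).filter (fun u => site u = k)).card

def Uf (m : ℕ) (k : ℤ) : ℤ := if k.natAbs ≤ m then ((m:ℤ) - k.natAbs)^2 else 0

def Ff (site : ℕ → ℤ) (t : ℕ) (k : ℤ) : ℤ := (firings site t k : ℤ)

def c0f (m : ℕ) (j : ℤ) : ℤ := if j = 0 then 4*(m:ℤ)-1 else 0

lemma Uf_nonneg (m : ℕ) (k : ℤ) : 0 ≤ Uf m k := by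
  unfold Uf; split_ifs
  · positivity
  · exact le_refl 0

lemma Ff_nonneg (site : ℕ → ℤ) (t : ℕ) (k : ℤ) : 0 ≤ Ff site t k := Int.natCast_nonneg _

lemma Ff_step (site : ℕ → ℤ) (t : ℕ) (k : ℤ) :
    Ff site (t+1) k = Ff site t k + (if site t = k then 1 else 0) := by
  simp only [Ff, firings, Finset.range_add_one, Finset.filter_insert]
  split_ifs with h
  · rw [Finset.card_insert_of_notMem (by simp)]
    push_cast; ring
  · simp

lemma conf_formula (m : ℕ) (hm : 1 ≤ m) (T : ℕ) (cfg : ℕ → ℤ → ℕ) (site : ℕ → ℤ)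
    (hinit : cfg 0 = fun j => if j = 0 then 4 * m - 1 else 0)
    (hstep : ∀ u < T, SLoopFire (cfg u) (cfg (u + 1)) (site u)) :
    ∀ t, t ≤ T → ∀ j, (cfg t j : ℤ)
      = c0f m j + Ff site t (j-1) + Ff site t (j+1) - 2 * Ff site t j := by
  intro t
  induction t with
  | zero =>
    intro _ j
    simp only [Ff, firings, Finset.range_zero, Finset.filter_empty, Finset.card_empty,
      Nat.cast_zero, hinit, c0f]
    split_ifs
    · push_cast; omega
    · simp
  | succ t ih =>
    intro ht j
    obtain ⟨h3, heq⟩ := hstep t (by omega)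
    have ih' := ih (by omega)
    have hc : cfg (t+1) j = if j = site t - 1 then cfg t j + 1
        else if j = site t + 1 then cfg t j + 1
        else if j = site t then cfg t j - 2
        else cfg t j := by rw [heq]
    rw [Ff_step, Ff_step, Ff_step]
    by_cases h1 : j = site t - 1
    · rw [hc, if_pos h1]
      rw [if_neg (by omega : ¬ site t = j - 1), if_pos (by omega : site t = j + 1),
        if_neg (by omega : ¬ site t = j)]
      have := ih' j
      push_cast
      omega
    · by_cases h2 : j = site t + 1
      · rw [hc, if_neg h1, if_pos h2]
        rw [if_pos (by omega : site t = j - 1), if_neg (by omega : ¬ site t = j + 1),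
          if_neg (by omega : ¬ site t = j)]
        have := ih' j
        push_cast
        omega
      · by_cases h4 : j = site t
        · rw [hc, if_neg h1, if_neg h2, if_pos h4]
          rw [if_neg (by omega : ¬ site t = j - 1), if_neg (by omega : ¬ site t = j + 1),
            if_pos (by omega : site t = j)]
          have := ih' j
          subst h4
          push_cast [Nat.cast_sub (by omega : 2 ≤ cfg t (site t))]
          omega
        · rw [hc, if_neg h1, if_neg h2, if_neg h4]
          rw [if_neg (by omega : ¬ site t = j - 1), if_neg (by omega : ¬ site t = j + 1),
            if_neg (by omega : ¬ site t = j)]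
          have := ih' j
          omega
lemma Uf_neg (m : ℕ) (k : ℤ) : Uf m (-k) = Uf m k := by simp [Uf]

lemma Uf_lap (m : ℕ) (hm : 1 ≤ m) (i : ℤ) :
    (if i = 0 then 4*(m:ℤ)-1 else 0) + Uf m (i-1) + Uf m (i+1) - 2 * Uf m i
      = (if i = 0 then 1 else if i.natAbs < m then 2 else if i.natAbs = m then 1 else 0) := by
  -- reduce to i ≥ 0 by symmetry
  have key : ∀ j : ℤ, 1 ≤ j →
      Uf m (j-1) + Uf m (j+1) - 2 * Uf m j
        = (if j.natAbs < m then 2 else if j.natAbs = m then 1 else 0) := by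
    intro j hj
    obtain ⟨a, rfl⟩ : ∃ a : ℕ, j = (a:ℤ) := ⟨j.toNat, by omega⟩
    have ha : 1 ≤ a := by exact_mod_cast hj
    have h1 : ((a:ℤ) - 1).natAbs = a - 1 := by omega
    have h2 : ((a:ℤ) + 1).natAbs = a + 1 := by omega
    have h3 : (a:ℤ).natAbs = a := by omega
    rw [Uf, Uf, Uf, h1, h2, h3]
    rcases lt_trichotomy a m with h | h | h
    · have e1 : a - 1 ≤ m := by omega
      have e2 : a + 1 ≤ m := by omega
      have c1 : ((a - 1 : ℕ) : ℤ) = (a:ℤ) - 1 := by omega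
      simp only [if_pos e1, if_pos e2, if_pos (le_of_lt h), if_pos h, c1]
      push_cast
      ring
    · subst h
      have e1 : a - 1 ≤ a := by omega
      have c1 : ((a - 1 : ℕ) : ℤ) = (a:ℤ) - 1 := by omega
      simp only [if_pos e1, if_neg (by omega : ¬ a + 1 ≤ a), if_neg (lt_irrefl a), if_pos rfl, c1]
      simp
    · rcases Nat.eq_or_lt_of_le h with h' | h'
      · have e1 : a - 1 ≤ m := by omega
        have c1 : ((a - 1 : ℕ) : ℤ) = (a:ℤ) - 1 := by omega
        simp only [if_pos e1, if_neg (by omega : ¬ a + 1 ≤ m), if_neg (by omega : ¬ a ≤ m),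
          if_neg (by omega : ¬ a < m), if_neg (by omega : ¬ a = m), c1]
        have : ((m:ℤ)) - ((a:ℤ) - 1) = 0 := by omega
        rw [this]; ring
      · simp only [if_neg (by omega : ¬ a - 1 ≤ m), if_neg (by omega : ¬ a + 1 ≤ m),
          if_neg (by omega : ¬ a ≤ m), if_neg (by omega : ¬ a < m), if_neg (by omega : ¬ a = m)]
        ring
  rcases lt_trichotomy i 0 with h | h | h
  · have h1 : Uf m (i-1) = Uf m (-i+1) := by rw [← Uf_neg]; ring_nf
    have h2 : Uf m (i+1) = Uf m (-i-1) := by rw [← Uf_neg]; ring_nf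
    have h3 : Uf m i = Uf m (-i) := (Uf_neg m i).symm ▸ rfl
    have h4 : i.natAbs = (-i).natAbs := by omega
    have hne : ¬ i = 0 := by omega
    rw [if_neg hne, if_neg hne, h1, h2, h3, h4]
    have := key (-i) (by omega)
    linarith [this]
  · subst h
    have h1 : ((0:ℤ)-1).natAbs = 1 := by omega
    have h2 : ((0:ℤ)+1).natAbs = 1 := by omega
    have h3 : (0:ℤ).natAbs = 0 := by omega
    rw [if_pos rfl, if_pos rfl, Uf, Uf, Uf, h1, h2, h3]
    simp only [if_pos hm, if_pos (Nat.zero_le m)]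
    push_cast
    ring
  · have hne : ¬ i = 0 := by omega
    rw [if_neg hne, if_neg hne]
    have := key i (by omega)
    linarith [this]

lemma lap_bound (m : ℕ) (hm : 1 ≤ m) (T : ℕ) (cfg : ℕ → ℤ → ℕ) (site : ℕ → ℤ)
    (hinit : cfg 0 = fun j => if j = 0 then 4 * m - 1 else 0)
    (hstep : ∀ u < T, SLoopFire (cfg u) (cfg (u + 1)) (site u)) :
    ∀ t, t ≤ T → ∀ k, Ff site t k ≤ Uf m k := by
  intro t
  induction t with
  | zero =>
    intro _ k
    simp only [Ff, firings, Finset.range_zero, Finset.filter_empty, Finset.card_empty,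
      Nat.cast_zero]
    exact Uf_nonneg m k
  | succ t ih =>
    intro ht k
    have ih' := ih (by omega)
    obtain ⟨h3, _⟩ := hstep t (by omega)
    rw [Ff_step]
    by_cases hk : site t = k
    · rw [if_pos hk]
      subst hk
      set i := site t with hi
      have hlt : Ff site t i < Uf m i := by
        by_contra hge
        have heq : Ff site t i = Uf m i := le_antisymm (ih' i) (by omega)
        have hcf := conf_formula m hm T cfg site hinit hstep t (by omega) i
        have hlapv := Uf_lap m hm i
        have hub : (if i = 0 then (1:ℤ) else if i.natAbs < m then 2 else
            if i.natAbs = m then 1 else 0) ≤ 2 := by split_ifs <;> omega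
        have hb1 := ih' (i - 1)
        have hb2 := ih' (i + 1)
        have h3' : (3:ℤ) ≤ (cfg t i : ℤ) := by exact_mod_cast h3
        have hc0 : c0f m i = (if i = 0 then 4*(m:ℤ)-1 else 0) := rfl
        rw [hc0] at hcf
        linarith
      omega
    · rw [if_neg hk]
      simpa using ih' k
lemma side_zero (m : ℕ) (hm : 1 ≤ m) (r : ℕ → ℤ) (hpos : ∀ k, 0 ≤ r k) (hrm : r m = 0)
    (hconv : ∀ k : ℕ, 1 ≤ k → k < m → 2 * r k ≤ r (k-1) + r (k+1)) :
    (∀ k, k < m → r (k+1) ≤ r k) ∧ (r 0 ≤ r 1 → r 0 = 0) := by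
  set s : ℕ → ℤ := fun k => r (k+1) - r k with hs_def
  have hs : ∀ k : ℕ, k + 2 ≤ m → s k ≤ s (k+1) := by
    intro k hk
    have := hconv (k+1) (by omega) (by omega)
    simp only [hs_def]
    have h1 : k + 1 - 1 = k := by omega
    rw [h1] at this
    omega
  have mono : ∀ a j : ℕ, a + j + 1 ≤ m → s a ≤ s (a + j) := by
    intro a j
    induction j with
    | zero => intro _; simp
    | succ n ih =>
      intro h
      have h1 := ih (by omega)
      have h2 := hs (a + n) (by omega)
      have : a + (n+1) = (a+n) + 1 := by omega
      rw [this]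
      omega
  have slast : s (m-1) ≤ 0 := by
    have h1 : (m-1) + 1 = m := by omega
    simp only [hs_def, h1, hrm]
    have := hpos (m-1)
    omega
  have snonpos : ∀ k, k < m → s k ≤ 0 := by
    intro k hk
    have h1 : k + (m - 1 - k) = m - 1 := by omega
    have := mono k (m - 1 - k) (by omega)
    rw [h1] at this
    omega
  constructor
  · intro k hk
    have := snonpos k hk
    simp only [hs_def] at this
    omega
  · intro h01
    have s0 : 0 ≤ s 0 := by simp only [hs_def, Nat.zero_add]; omega
    have szero : ∀ k, k < m → s k = 0 := by
      intro k hk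
      have h1 := mono 0 k (by omega)
      simp only [Nat.zero_add] at h1
      have := snonpos k hk
      omega
    have rconst : ∀ k, k ≤ m → r k = r 0 := by
      intro k
      induction k with
      | zero => intro _; rfl
      | succ n ih =>
        intro h
        have h1 := ih (by omega)
        have h2 := szero n (by omega)
        simp only [hs_def] at h2
        omega
    have := rconst m (le_refl m)
    omega

/-- Unlabeled self-loop chip-firing with `4m - 1` chips at the origin: in every
complete firing sequence, the number of firings at site `k` equals
`(m - |k|)^2` for `|k| ≤ m` and `0` for `|k| > m`. -/
theorem stmt12 (m : ℕ) (hm : 1 ≤ m) (T : ℕ) (cfg : ℕ → ℤ → ℕ) (site : ℕ → ℤ)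
    (hinit : cfg 0 = fun j => if j = 0 then 4 * m - 1 else 0)
    (hstep : ∀ u < T, SLoopFire (cfg u) (cfg (u + 1)) (site u))
    (hcomplete : ∀ i : ℤ, cfg T i ≤ 2) :
    (∀ k : ℤ, k.natAbs ≤ m → firings site T k = (m - k.natAbs) ^ 2) ∧
    (∀ k : ℤ, m < k.natAbs → firings site T k = 0) := by
  have hconfT := conf_formula m hm T cfg site hinit hstep T le_rfl
  have hlap := lap_bound m hm T cfg site hinit hstep T le_rfl
  set d : ℤ → ℤ := fun k => Uf m k - Ff site T k with hd
  have hd0 : ∀ k, 0 ≤ d k := fun k => by simp only [hd]; linarith [hlap k]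
  have hUzero : ∀ k : ℤ, m ≤ k.natAbs → Uf m k = 0 := by
    intro k hk; unfold Uf; split_ifs with h
    · have he : (k.natAbs : ℤ) = (m:ℤ) := by omega
      rw [he]; ring
    · rfl
  have hdout : ∀ k : ℤ, m ≤ k.natAbs → d k = 0 := by
    intro k hk
    have h1 := hUzero k hk
    have h2 := hlap k
    have h3 := Ff_nonneg site T k
    simp only [hd]; omega
  have key : ∀ i : ℤ, (if i = 0 then (1:ℤ) else if i.natAbs < m then 2 else
      if i.natAbs = m then 1 else 0) - 2 ≤ d (i-1) + d (i+1) - 2 * d i := by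
    intro i
    have h1 := Uf_lap m hm i
    have h2 := hconfT i
    have h3 : (cfg T i : ℤ) ≤ 2 := by exact_mod_cast hcomplete i
    have hc0 : c0f m i = (if i = 0 then 4*(m:ℤ)-1 else 0) := rfl
    rw [hc0] at h2
    simp only [hd]
    linarith
  -- right side
  have hrm : d ((m:ℕ):ℤ) = 0 := hdout _ (by simp)
  have hconvr : ∀ k : ℕ, 1 ≤ k → k < m →
      2 * d (k:ℤ) ≤ d ((k-1:ℕ):ℤ) + d ((k+1:ℕ):ℤ) := by
    intro k h1k hkm
    have hk := key (k:ℤ)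
    rw [if_neg (by exact_mod_cast (by omega : ¬ k = 0) : ¬ (k:ℤ) = 0),
      if_pos (by omega : ((k:ℤ)).natAbs < m)] at hk
    have e1 : (k:ℤ) - 1 = ((k-1:ℕ):ℤ) := by omega
    have e2 : (k:ℤ) + 1 = ((k+1:ℕ):ℤ) := by push_cast; ring
    rw [e1, e2] at hk
    linarith
  obtain ⟨hrmono, hrzero⟩ := side_zero m hm (fun k => d (k:ℤ)) (fun k => hd0 _) hrm hconvr
  -- left side
  have hlm : d (-(m:ℕ):ℤ) = 0 := hdout _ (by simp)
  have hconvl : ∀ k : ℕ, 1 ≤ k → k < m →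
      2 * d (-(k:ℤ)) ≤ d (-((k-1:ℕ):ℤ)) + d (-((k+1:ℕ):ℤ)) := by
    intro k h1k hkm
    have hk := key (-(k:ℤ))
    rw [if_neg (by omega : ¬ (-(k:ℤ)) = 0),
      if_pos (by omega : ((-(k:ℤ))).natAbs < m)] at hk
    have e1 : -(k:ℤ) - 1 = -((k+1:ℕ):ℤ) := by push_cast; ring
    have e2 : -(k:ℤ) + 1 = -((k-1:ℕ):ℤ) := by omega
    rw [e1, e2] at hk
    linarith
  obtain ⟨hlmono, hlzero⟩ :=
    side_zero m hm (fun k => d (-(k:ℤ))) (fun k => hd0 _) hlm hconvl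
  have A : d 1 ≤ d 0 := by have := hrmono 0 (by omega); simpa using this
  have B : d (-1) ≤ d 0 := by have := hlmono 0 (by omega); simpa using this
  have conv0 : 2 * d 0 - 1 ≤ d (-1) + d 1 := by
    have hk := key 0
    rw [if_pos rfl] at hk
    have e1 : (0:ℤ) - 1 = -1 := by ring
    have e2 : (0:ℤ) + 1 = 1 := by ring
    rw [e1, e2] at hk
    linarith
  have d0 : d 0 = 0 := by
    by_cases h01 : d 0 ≤ d 1
    · have := hrzero (by simpa using h01)
      simpa using this
    · by_cases h02 : d 0 ≤ d (-1)
      · have := hlzero (by simpa using h02)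
        simpa using this
      · omega
  have rall : ∀ a : ℕ, a ≤ m → d (a:ℤ) = 0 := by
    intro a
    induction a with
    | zero => intro _; simpa using d0
    | succ n ih =>
      intro h
      have h1 := ih (by omega)
      have h2 := hrmono n (by omega)
      have h3 := hd0 ((n+1:ℕ):ℤ)
      push_cast at h1 h2 h3 ⊢
      omega
  have lall : ∀ a : ℕ, a ≤ m → d (-(a:ℤ)) = 0 := by
    intro a
    induction a with
    | zero => intro _; simpa using d0
    | succ n ih =>
      intro h
      have h1 := ih (by omega)
      have h2 := hlmono n (by omega)
      have h3 := hd0 (-((n+1:ℕ):ℤ))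
      push_cast at h1 h2 h3 ⊢
      omega
  have dall : ∀ k : ℤ, d k = 0 := by
    intro k
    by_cases hk : k.natAbs ≤ m
    · rcases le_or_gt 0 k with h | h
      · have e : k = (k.natAbs:ℤ) := by omega
        rw [e]; exact rall _ hk
      · have e : k = -(k.natAbs:ℤ) := by omega
        rw [e]; exact lall _ hk
    · exact hdout k (by omega)
  constructor
  · intro k hk
    have hDk := dall k
    simp only [hd] at hDk
    have hU : Uf m k = ((m:ℤ) - k.natAbs)^2 := if_pos hk
    have hsub : ((m - k.natAbs : ℕ):ℤ) = (m:ℤ) - k.natAbs := by omega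
    have hc : (((m - k.natAbs)^2 : ℕ) : ℤ) = ((m:ℤ) - (k.natAbs:ℤ))^2 := by
      rw [Nat.cast_pow, hsub]
    have hF : (firings site T k : ℤ) = (((m - k.natAbs)^2 : ℕ) : ℤ) := by
      rw [hc]
      have h5 : Ff site T k = ((m:ℤ) - k.natAbs)^2 := by omega
      unfold Ff at h5
      exact_mod_cast h5
    exact_mod_cast hF
  · intro k hk
    have hDk := dall k
    simp only [hd] at hDk
    have hU := hUzero k (by omega)
    have h5 : Ff site T k = 0 := by omega
    unfold Ff at h5
    exact_mod_cast h5
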